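/- arXiv:1305.1243 — 2 statements merged into one kernel-verified Lean document; each statement's English description precedes it below -/
import Mathlib

section
/- Let p ≡ 1 (mod 4) be prime, ψ a nontrivial additive character of F_p, χ₂ the quadratic character, ρ a character of order 4 of F_p× with ρ² = χ₂. For A, B ∈ F_p× the identity ∑_{x ∈ F_p} χ₂(x) ψ(A x² + B x) = χ₂(AB) ψ(−B²·(8A)⁻¹) · ∑_{b ∈ F_p×} ρ(b) ψ((16A)⁻¹ B² (b + b⁻¹)) holds. -/
/-!
Put `c = B² / (16 A)`. Substituting `b = y²` (the square roots of `b` are counted by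
`1 + χ₂ b`) and using `ρ b⁻¹ = χ₂ b · ρ b` shows that twice the Salié sum equals
`∑ y, χ₂ y ψ (c (y² + y⁻²))`; completing the square, `ψ (-2c)` times it is
`∑ y, χ₂ y ψ (c (y - y⁻¹)²)`. Parametrising `y` by `s = y + y⁻¹`, whose fibres are counted by
`1 + χ₂ (s² - 4)`, and using `χ₂ y = χ₂ (s - 2)`, this becomes `2 ∑ t, χ₂ t ψ (c (t² + 4t))`
after `t = s - 2` and the symmetry `t ↦ -t - 4`, which needs `χ₂ (-1) = 1`, i.e. `p ≡ 1 mod 4`.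
Finally `t = 4 A B⁻¹ x` turns this into `2 χ₂ (AB)` times the left-hand side.
-/

open Finset

lemma sum_units_eq_sum_of_map_zero {G M : Type*} [GroupWithZero G] [Fintype G] [DecidableEq G]
    [AddCommMonoid M] (f : G → M) (h0 : f 0 = 0) : ∑ u : Gˣ, f u = ∑ x, f x := by
  rw [Fintype.sum_eq_add_sum_subtype_ne f 0, h0, zero_add]
  exact Fintype.sum_equiv unitsEquivNeZero _ _ fun _ => rfl

lemma AddChar.map_neg_two_mul_mul_map_mul_sq_add_inv_sq {F R : Type*} [Field F] [CommMonoid R]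
    (ψ : AddChar F R) (c : F) {y : F} (hy : y ≠ 0) :
    ψ (-2 * c) * ψ (c * (y ^ 2 + (y ^ 2)⁻¹)) = ψ (c * (y - y⁻¹) ^ 2) := by
  rw [← AddChar.map_add_eq_mul]
  congr 1
  field_simp
  ring

section

variable {F R : Type*} [Field F] [Fintype F] [DecidableEq F] [CommRing R]

lemma sum_comp_eq_of_card_fiber_eq_card_sqrts (hF : ringChar F ≠ 2) {ι : Type*}
    [Fintype ι] (φ : ι → F) (q : F → F) (hφ : ∀ s, #{i | φ i = s} = #{u | u ^ 2 = q s})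
    (g : F → R) :
    ∑ i, g (φ i) = ∑ s, (1 + (quadraticChar F (q s) : R)) * g s := by
  rw [← sum_fiberwise' univ φ g]
  refine sum_congr rfl fun s _ => ?_
  have hcard := quadraticChar_card_sqrts hF (q s)
  rw [Set.toFinset_ofPred, ← hφ] at hcard
  rw [sum_const, nsmul_eq_mul, add_comm, ← Int.cast_natCast, hcard]
  push_cast
  ring

lemma sum_comp_sq (hF : ringChar F ≠ 2) (g : F → R) :
    ∑ y, g (y ^ 2) = ∑ x, (1 + (quadraticChar F x : R)) * g x :=
  sum_comp_eq_of_card_fiber_eq_card_sqrts hF _ id (fun _ => rfl) g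

lemma card_units_add_inv_eq_card_sqrts (hF : ringChar F ≠ 2) (s : F) :
    #{t : Fˣ | (t : F) + (t : F)⁻¹ = s} = #{u : F | u ^ 2 = s ^ 2 - 4} := by
  have h2 : (2 : F) ≠ 0 := Ring.two_ne_zero hF
  have hsu : ∀ u : F, u ^ 2 = s ^ 2 - 4 → s + u ≠ 0 := fun u hu h =>
    mul_ne_zero h2 h2 (by linear_combination hu - (u - s) * h)
  -- `t ↦ t - t⁻¹` and `u ↦ (s + u) / 2` are mutually inverse
  refine card_bij' (fun t _ => (t : F) - (t : F)⁻¹)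
    (fun u hu => Units.mk0 ((s + u) / 2) (div_ne_zero (hsu u (mem_filter.mp hu).2) h2))
    ?_ ?_ ?_ ?_
  · rintro t ht
    obtain rfl := (mem_filter.mp ht).2
    simp only [mem_filter, mem_univ, true_and]
    field_simp [t.ne_zero]
    ring
  · rintro u hu
    have hu' := (mem_filter.mp hu).2
    have hne := hsu u hu'
    simp only [mem_filter, mem_univ, true_and, Units.val_mk0]
    field_simp
    linear_combination hu'
  · rintro t ht
    obtain rfl := (mem_filter.mp ht).2
    ext
    simp only [Units.val_mk0]
    field_simp
    ring
  · rintro u hu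
    have hu' := (mem_filter.mp hu).2
    have hne := hsu u hu'
    simp only [Units.val_mk0]
    field_simp
    linear_combination -hu'

lemma sum_units_comp_add_inv (hF : ringChar F ≠ 2) (g : F → R) :
    ∑ t : Fˣ, g ((t : F) + (t : F)⁻¹) = ∑ s, (1 + (quadraticChar F (s ^ 2 - 4) : R)) * g s :=
  sum_comp_eq_of_card_fiber_eq_card_sqrts hF _ _ (card_units_add_inv_eq_card_sqrts hF) g

lemma MulChar.apply_sq_of_sq_eq_quadraticChar {ρ : MulChar F R}
    (hρ : ρ ^ 2 = (quadraticChar F).ringHomComp (Int.castRingHom R)) (x : F) :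
    ρ (x ^ 2) = quadraticChar F x := by
  rw [map_pow, ← MulChar.pow_apply' ρ two_ne_zero, hρ, MulChar.ringHomComp_apply, eq_intCast]

lemma MulChar.apply_inv_of_sq_eq_quadraticChar {ρ : MulChar F R}
    (hρ : ρ ^ 2 = (quadraticChar F).ringHomComp (Int.castRingHom R)) (x : F) :
    ρ x⁻¹ = quadraticChar F x * ρ x := by
  rcases eq_or_ne x 0 with rfl | hx
  · simp
  have hinv : ρ x⁻¹ * ρ x = 1 := by rw [← map_mul, inv_mul_cancel₀ hx, map_one]
  have hχ : (quadraticChar F x : R) ^ 2 = 1 := by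
    rw [← Int.cast_pow, quadraticChar_sq_one hx, Int.cast_one]
  have hsq := MulChar.apply_sq_of_sq_eq_quadraticChar hρ x
  rw [map_pow] at hsq
  linear_combination
    (quadraticChar F x * ρ x) * hinv - ρ x⁻¹ * hχ - ρ x⁻¹ * quadraticChar F x * hsq

lemma two_mul_sum_units_mulChar_mul_eq_sum_quadraticChar_mul (hF : ringChar F ≠ 2)
    {ρ : MulChar F R} (hρ : ρ ^ 2 = (quadraticChar F).ringHomComp (Int.castRingHom R)) (h : F → R)
    (hh : ∀ x, h x⁻¹ = h x) :
    2 * ∑ b : Fˣ, ρ b * h b = ∑ y, quadraticChar F y * h (y ^ 2) := by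
  have hfull : ∑ b : Fˣ, ρ b * h b = ∑ x, ρ x * h x :=
    sum_units_eq_sum_of_map_zero (fun x => ρ x * h x) (by rw [MulChar.map_zero, zero_mul])
  have htwist : ∑ x, ρ x * h x = ∑ x, quadraticChar F x * (ρ x * h x) := by
    rw [← Equiv.sum_comp (Equiv.inv F)]
    refine sum_congr rfl fun x _ => ?_
    rw [Equiv.inv_apply, MulChar.apply_inv_of_sq_eq_quadraticChar hρ, hh, mul_assoc]
  calc 2 * ∑ b : Fˣ, ρ b * h b = ∑ x, (1 + (quadraticChar F x : R)) * (ρ x * h x) := by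
        simp only [add_mul, one_mul, sum_add_distrib, ← htwist, hfull, two_mul]
    _ = ∑ y, ρ (y ^ 2) * h (y ^ 2) := (sum_comp_sq hF _).symm
    _ = ∑ y, quadraticChar F y * h (y ^ 2) := by
        simp only [MulChar.apply_sq_of_sq_eq_quadraticChar hρ]

lemma sum_units_quadraticChar_mul_comp_sub_inv_sq (hF : ringChar F ≠ 2) (g : F → R) :
    ∑ y : Fˣ, (quadraticChar F y : R) * g (((y : F) - (y : F)⁻¹) ^ 2) =
      g 0 + ∑ s, (1 + (quadraticChar F (s ^ 2 - 4) : R)) *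
        ((quadraticChar F (s - 2) : R) * g (s ^ 2 - 4)) := by
  -- `y + y⁻¹ - 2 = y (y⁻¹ - 1) ^ 2` has the quadratic character of `y`, except at `y = 1`
  have hpt : ∀ y : Fˣ, (quadraticChar F y : R) * g (((y : F) - (y : F)⁻¹) ^ 2) =
      (if y = 1 then g 0 else 0) + (quadraticChar F ((y : F) + (y : F)⁻¹ - 2) : R) *
        g (((y : F) + (y : F)⁻¹) ^ 2 - 4) := by
    intro y
    have hy := y.ne_zero
    have hsq : ((y : F) + (y : F)⁻¹) ^ 2 - 4 = ((y : F) - (y : F)⁻¹) ^ 2 := by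
      field_simp
      ring
    rw [hsq]
    split_ifs with h1
    · rw [h1, Units.val_one, inv_one, show (1 : F) + 1 - 2 = 0 by ring, quadraticChar_zero]
      simp
    · have hy1 : (y : F)⁻¹ - 1 ≠ 0 := by
        rwa [sub_ne_zero, inv_ne_one, ← Units.val_one, Ne, Units.val_inj]
      have hfac : (y : F) + (y : F)⁻¹ - 2 = y * ((y : F)⁻¹ - 1) ^ 2 := by
        field_simp
        ring
      rw [hfac, map_mul, quadraticChar_sq_one' hy1, mul_one, zero_add]
  rw [sum_congr rfl fun y _ => hpt y, sum_add_distrib, sum_ite_eq' univ (1 : Fˣ),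
    if_pos (mem_univ _), sum_units_comp_add_inv hF
      (fun s => (quadraticChar F (s - 2) : R) * g (s ^ 2 - 4))]

lemma sum_one_add_quadraticChar_mul_comp_sq_sub_four (hF : ringChar F ≠ 2)
    (hχ : quadraticChar F (-1) = 1) (g : F → R) :
    ∑ s, (1 + (quadraticChar F (s ^ 2 - 4) : R)) *
        ((quadraticChar F (s - 2) : R) * g (s ^ 2 - 4)) =
      2 * ∑ t, (quadraticChar F t : R) * g (t ^ 2 + 4 * t) - g 0 := by
  have h4 : quadraticChar F 4 = 1 := by
    rw [show (4 : F) = 2 ^ 2 by norm_num]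
    exact quadraticChar_sq_one' (Ring.two_ne_zero hF)
  have hshift : ∀ t, (1 + (quadraticChar F ((t + 2) ^ 2 - 4) : R)) *
      ((quadraticChar F (t + 2 - 2) : R) * g ((t + 2) ^ 2 - 4)) =
      (quadraticChar F t : R) * g (t ^ 2 + 4 * t) +
        (quadraticChar F (t + 4) : R) * g (t ^ 2 + 4 * t) - (if t = 0 then g 0 else 0) := by
    intro t
    rw [show (t + 2) ^ 2 - 4 = t * (t + 4) by ring, add_sub_cancel_right, map_mul,
      show t * (t + 4) = t ^ 2 + 4 * t by ring]
    split_ifs with ht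
    · simp [ht, h4]
    · have hχt : (quadraticChar F t : R) ^ 2 = 1 := by
        rw [← Int.cast_pow, quadraticChar_sq_one ht, Int.cast_one]
      push_cast
      linear_combination (quadraticChar F (t + 4) : R) * g (t ^ 2 + 4 * t) * hχt
  -- `t ↦ -t - 4` fixes `t ^ 2 + 4 t` and moves `t + 4` to `-t`
  have hreflect : ∑ t, (quadraticChar F (t + 4) : R) * g (t ^ 2 + 4 * t) =
      ∑ t, (quadraticChar F t : R) * g (t ^ 2 + 4 * t) := by
    refine Fintype.sum_bijective (fun t => -t - 4) (Function.Involutive.bijective fun t => by ring)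
      _ _ fun t => ?_
    rw [show -t - 4 = -1 * (t + 4) by ring, map_mul, hχ, one_mul,
      show (-1 * (t + 4)) ^ 2 + 4 * (-1 * (t + 4)) = t ^ 2 + 4 * t by ring]
  rw [← Equiv.sum_comp (Equiv.addRight (2 : F))]
  simp only [Equiv.coe_addRight, hshift, sum_sub_distrib, sum_add_distrib, hreflect,
    sum_ite_eq' univ (0 : F), if_pos (mem_univ _)]
  ring

lemma sum_quadraticChar_mul_comp_sub_inv_sq (hF : ringChar F ≠ 2)
    (hχ : quadraticChar F (-1) = 1) (g : F → R) :
    ∑ y, (quadraticChar F y : R) * g ((y - y⁻¹) ^ 2) =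
      2 * ∑ t, (quadraticChar F t : R) * g (t ^ 2 + 4 * t) := by
  rw [← sum_units_eq_sum_of_map_zero _ (by rw [quadraticChar_zero, Int.cast_zero, zero_mul]),
    sum_units_quadraticChar_mul_comp_sub_inv_sq hF,
    sum_one_add_quadraticChar_mul_comp_sq_sub_four hF hχ]
  ring

lemma sum_quadraticChar_mul_comp_mul {a : F} (ha : a ≠ 0) (f : F → R) :
    ∑ x, (quadraticChar F x : R) * f x =
      quadraticChar F a * ∑ x, (quadraticChar F x : R) * f (a * x) := by
  rw [mul_sum]
  refine (Fintype.sum_bijective (a * ·) (mulLeft_bijective₀ a ha) _ _ fun x => ?_).symm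
  rw [map_mul, Int.cast_mul, mul_assoc]

lemma sum_quadraticChar_mul_comp_sq_add_four_mul (hF : ringChar F ≠ 2) {A B : F} (hA : A ≠ 0)
    (hB : B ≠ 0) (f : F → R) :
    ∑ t, (quadraticChar F t : R) * f ((16 * A)⁻¹ * B ^ 2 * (t ^ 2 + 4 * t)) =
      quadraticChar F (A * B) * ∑ x, (quadraticChar F x : R) * f (A * x ^ 2 + B * x) := by
  have h2 := Ring.two_ne_zero hF
  have h4 : (4 : F) ≠ 0 := by simpa [show (4 : F) = 2 ^ 2 by norm_num] using h2
  have h16 : (16 : F) ≠ 0 := by simpa [show (16 : F) = 2 ^ 4 by norm_num] using h2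
  -- substitute `t = 4 A B⁻¹ x`
  have ha : 4 * A * B⁻¹ ≠ 0 := mul_ne_zero (mul_ne_zero h4 hA) (inv_ne_zero hB)
  have hχa : quadraticChar F (4 * A * B⁻¹) = quadraticChar F (A * B) := by
    rw [show 4 * A * B⁻¹ = A * B * (2 * B⁻¹) ^ 2 by field_simp; ring, map_mul,
      quadraticChar_sq_one' (mul_ne_zero h2 (inv_ne_zero hB)), mul_one]
  rw [sum_quadraticChar_mul_comp_mul ha, hχa]
  congr 2 with x
  congr 2
  field_simp
  ring

theorem sum_quadraticChar_mul_addChar_eq_salie_sum [IsDomain R] [NeZero (2 : R)]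
    (hF : ringChar F ≠ 2) (hχ : quadraticChar F (-1) = 1) {ρ : MulChar F R}
    (hρ : ρ ^ 2 = (quadraticChar F).ringHomComp (Int.castRingHom R)) (ψ : AddChar F R)
    {A B : F} (hA : A ≠ 0) (hB : B ≠ 0) :
    ∑ x, (quadraticChar F x : R) * ψ (A * x ^ 2 + B * x) =
      (quadraticChar F (A * B) : R) * ψ (-B ^ 2 * (8 * A)⁻¹) *
        ∑ b : Fˣ, ρ b * ψ ((16 * A)⁻¹ * B ^ 2 * ((b : F) + (b : F)⁻¹)) := by
  set c := (16 * A)⁻¹ * B ^ 2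
  set χAB : R := (quadraticChar F (A * B) : R)
  set L := ∑ x, (quadraticChar F x : R) * ψ (A * x ^ 2 + B * x)
  have hd : -B ^ 2 * (8 * A)⁻¹ = -2 * c := by
    have h2 := Ring.two_ne_zero hF
    have h8 : (8 : F) ≠ 0 := by simpa [show (8 : F) = 2 ^ 3 by norm_num] using h2
    have h16 : (16 : F) ≠ 0 := by simpa [show (16 : F) = 2 ^ 4 by norm_num] using h2
    simp only [c]
    field_simp
    ring
  have hcomplete : ∀ y : F,
      ψ (-2 * c) * ((quadraticChar F y : R) * ψ (c * (y ^ 2 + (y ^ 2)⁻¹))) =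
        (quadraticChar F y : R) * ψ (c * (y - y⁻¹) ^ 2) := by
    intro y
    rcases eq_or_ne y 0 with rfl | hy
    · simp
    rw [mul_left_comm, ψ.map_neg_two_mul_mul_map_mul_sq_add_inv_sq c hy]
  have key : ψ (-2 * c) * (2 * ∑ b : Fˣ, ρ b * ψ (c * (b + (b : F)⁻¹))) =
      2 * (χAB * L) := by
    rw [two_mul_sum_units_mulChar_mul_eq_sum_quadraticChar_mul hF hρ
      (fun x => ψ (c * (x + x⁻¹))) fun x => by rw [inv_inv, add_comm], mul_sum]
    simp only [hcomplete]
    rw [sum_quadraticChar_mul_comp_sub_inv_sq hF hχ (fun u => ψ (c * u)),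
      sum_quadraticChar_mul_comp_sq_add_four_mul hF hA hB]
  have hχAB : χAB * χAB = 1 := by
    rw [← Int.cast_mul, ← sq, quadraticChar_sq_one (mul_ne_zero hA hB), Int.cast_one]
  rw [hd]
  refine mul_left_cancel₀ (two_ne_zero (α := R)) ?_
  linear_combination -χAB * key - 2 * L * hχAB

end

theorem stmt_3_general {p : ℕ} [Fact p.Prime] (hp : p % 4 = 1)
    (ψ : AddChar (ZMod p) ℂ)
    (ρ : MulChar (ZMod p) ℂ)
    (hρ2 : ρ ^ 2 = (quadraticChar (ZMod p)).ringHomComp (Int.castRingHom ℂ))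
    (A B : ZMod p) (hA : A ≠ 0) (hB : B ≠ 0) :
    ∑ x : ZMod p, ((quadraticChar (ZMod p) x : ℤ) : ℂ) * ψ (A * x ^ 2 + B * x) =
      ((quadraticChar (ZMod p) (A * B) : ℤ) : ℂ) * ψ (-B ^ 2 * (8 * A)⁻¹) *
        ∑ b : (ZMod p)ˣ,
          ρ (b : ZMod p) * ψ ((16 * A)⁻¹ * B ^ 2 * ((b : ZMod p) + ((b : ZMod p))⁻¹)) := by
  have hF : ringChar (ZMod p) ≠ 2 := by rw [ZMod.ringChar_zmod_n]; omega
  have hχ : quadraticChar (ZMod p) (-1) = 1 := by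
    rw [quadraticChar_neg_one hF, ZMod.card, ZMod.χ₄_nat_one_mod_four hp]
  exact sum_quadraticChar_mul_addChar_eq_salie_sum hF hχ hρ2 ψ hA hB

/-- The quadratically twisted quadratic sum equals a quartic-twisted Salié-type sum. -/
theorem stmt_3 {p : ℕ} [Fact p.Prime] (hp : p % 4 = 1)
    (ψ : AddChar (ZMod p) ℂ) (hψ : ψ ≠ 1)
    (ρ : MulChar (ZMod p) ℂ) (hρ : orderOf ρ = 4)
    (hρ2 : ρ ^ 2 = (quadraticChar (ZMod p)).ringHomComp (Int.castRingHom ℂ))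
    (A B : ZMod p) (hA : A ≠ 0) (hB : B ≠ 0) :
    ∑ x : ZMod p, ((quadraticChar (ZMod p) x : ℤ) : ℂ) * ψ (A * x ^ 2 + B * x) =
      ((quadraticChar (ZMod p) (A * B) : ℤ) : ℂ) * ψ (-B ^ 2 * (8 * A)⁻¹) *
        ∑ b : (ZMod p)ˣ,
          ρ (b : ZMod p) * ψ ((16 * A)⁻¹ * B ^ 2 * ((b : ZMod p) + ((b : ZMod p))⁻¹)) :=
  stmt_3_general hp ψ ρ hρ2 A B hA hB
end

section
/- Let p be an odd prime, ψ a nontrivial additive character of F_p, χ₂ the quadratic character, and η, τ denote Gauss sums τ(χ) = ∑_{x∈F_p×} χ(x)ψ(x). Then for any character χ of F_p× one has the Hasse–Davenport product relation τ(χ²) · τ(χ₂) = χ(4) · τ(χ) · τ(χ·χ₂) (whenever χ² is nontrivial). -/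
/-!
Write `χ₂` for the quadratic character and `J` for Jacobi sums. For `χχ'` nontrivial,
`g(χχ') J(χ, χ') = g(χ) g(χ')`, so the relation reduces to `J(χ, χ₂) = χ(4) J(χ, χ)`.
The substitution `x = (1 + t) / 2` turns `χ(4) J(χ, χ)` into `∑ₜ χ(1 - t²)`, and since
`u` has `1 + χ₂(u)` square roots this equals `∑ᵤ (1 + χ₂(u)) χ(1 - u) = J(χ, χ₂)`,
the term `∑ᵤ χ(1 - u)` vanishing because `χ` is nontrivial.
-/

open Finset

lemma MulChar.IsQuadratic.mul_ne_one {M R : Type*} [CommMonoid M] [CommRing R]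
    {φ χ : MulChar M R} (hφ : φ.IsQuadratic) (hχ : χ ^ 2 ≠ 1) : χ * φ ≠ 1 := by
  intro h
  rw [eq_inv_of_mul_eq_one_left h, hφ.inv] at hχ
  exact hχ hφ.sq_eq_one

section FiniteField

variable {F R : Type*} [Field F] [Fintype F]

lemma apply_four_mul_jacobiSum_self [CommRing R] (hF : ringChar F ≠ 2) (χ : MulChar F R) :
    χ 4 * jacobiSum χ χ = ∑ t : F, χ (1 - t ^ 2) := by
  have h2 : (2 : F) ≠ 0 := Ring.two_ne_zero hF
  let e : F ≃ F := (Equiv.addLeft 1).trans (Equiv.mulRight₀ 2⁻¹ (inv_ne_zero h2))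
  rw [jacobiSum, mul_sum, ← e.sum_comp]
  refine sum_congr rfl fun t _ => ?_
  rw [← map_mul, ← map_mul]
  congr 1
  change 4 * ((1 + t) * 2⁻¹ * (1 - (1 + t) * 2⁻¹)) = 1 - t ^ 2
  field_simp
  ring

variable [DecidableEq F]

lemma sum_comp_sq_eq_sum_quadraticChar_add_one_mul [CommRing R] (hF : ringChar F ≠ 2)
    (f : F → R) : ∑ t : F, f (t ^ 2) = ∑ u : F, ((quadraticChar F u : R) + 1) * f u := by
  rw [← sum_fiberwise' univ (· ^ 2) f]
  refine sum_congr rfl fun u _ => ?_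
  rw [sum_const, nsmul_eq_mul]
  congr 1
  have hcard := quadraticChar_card_sqrts hF u
  rw [Set.toFinset_ofPred] at hcard
  exact_mod_cast congrArg (Int.cast : ℤ → R) hcard

lemma jacobiSum_quadraticChar [CommRing R] [IsDomain R] (hF : ringChar F ≠ 2)
    {χ : MulChar F R} (hχ : χ ≠ 1) :
    jacobiSum χ ((quadraticChar F).ringHomComp (Int.castRingHom R)) = χ 4 * jacobiSum χ χ := by
  have sum_apply_one_sub : ∑ u : F, χ (1 - u) = 0 :=
    ((Equiv.subLeft 1).sum_comp χ).trans (MulChar.sum_eq_zero_of_ne_one hχ)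
  rw [apply_four_mul_jacobiSum_self hF,
    sum_comp_sq_eq_sum_quadraticChar_add_one_mul hF (fun u => χ (1 - u)), jacobiSum_comm,
    jacobiSum]
  simp only [add_mul, one_mul, sum_add_distrib, sum_apply_one_sub, add_zero,
    MulChar.ringHomComp_apply, eq_intCast]

theorem gaussSum_sq_mul_gaussSum_quadraticChar [Field R] [CharZero R] (hF : ringChar F ≠ 2)
    {ψ : AddChar F R} (hψ : ψ.IsPrimitive) {χ : MulChar F R} (hχ : χ ^ 2 ≠ 1) :
    gaussSum (χ ^ 2) ψ * gaussSum ((quadraticChar F).ringHomComp (Int.castRingHom R)) ψ =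
      χ 4 * gaussSum χ ψ *
        gaussSum (χ * (quadraticChar F).ringHomComp (Int.castRingHom R)) ψ := by
  set χ₂ := (quadraticChar F).ringHomComp (Int.castRingHom R)
  have hχ₁ : χ ≠ 1 := by rintro rfl; exact hχ (one_pow 2)
  have hχχ₂ : χ * χ₂ ≠ 1 := ((quadraticChar_isQuadratic F).comp _).mul_ne_one hχ
  have hgχ : gaussSum χ ψ ≠ 0 :=
    gaussSum_ne_zero_of_nontrivial (Nat.cast_ne_zero.mpr Fintype.card_ne_zero) hχ₁ hψ
  have hJχχ : gaussSum (χ ^ 2) ψ * jacobiSum χ χ = gaussSum χ ψ * gaussSum χ ψ :=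
    sq χ ▸ jacobiSum_mul_nontrivial (sq χ ▸ hχ) ψ
  have hJχχ₂ := jacobiSum_mul_nontrivial hχχ₂ ψ
  have key := jacobiSum_quadraticChar hF hχ₁
  refine mul_left_cancel₀ hgχ ?_
  linear_combination gaussSum (χ ^ 2) ψ * hJχχ₂.symm - χ 4 * gaussSum (χ * χ₂) ψ * hJχχ.symm
    + gaussSum (χ ^ 2) ψ * gaussSum (χ * χ₂) ψ * key

end FiniteField

/-- Hasse–Davenport product relation for `n = 2`:
`τ(χ²) τ(χ₂) = χ(4) τ(χ) τ(χ χ₂)` when `χ²` is nontrivial. -/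
theorem stmt_4 {p : ℕ} [Fact p.Prime] (hp : p ≠ 2)
    (ψ : AddChar (ZMod p) ℂ) (hψ : ψ ≠ 1)
    (χ : MulChar (ZMod p) ℂ) (hχ : χ ^ 2 ≠ 1) :
    gaussSum (χ ^ 2) ψ *
        gaussSum ((quadraticChar (ZMod p)).ringHomComp (Int.castRingHom ℂ)) ψ =
      χ 4 * gaussSum χ ψ *
        gaussSum (χ * (quadraticChar (ZMod p)).ringHomComp (Int.castRingHom ℂ)) ψ := by
  have hp' : ringChar (ZMod p) ≠ 2 := by rwa [ZMod.ringChar_zmod_n]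
  exact gaussSum_sq_mul_gaussSum_quadraticChar hp' (AddChar.IsPrimitive.of_ne_one hψ) hχ
end
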